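/- arXiv:1504.07896 — 4 statements merged into one kernel-verified Lean document; each statement's English description precedes it below -/
import Mathlib

section
/- Let η, p, σ ∈ ℂ satisfy (σ² − 2η)² = 4(η² + p²). Then the vector X(σ) = (2σ, −2p, σ², −σ², −2p, σ(σ² − 2η)) ∈ ℂ⁶ satisfies A∞(η,p) · X(σ) = σ · X(σ); i.e., X(σ) is an eigenvector of A∞(η,p) with eigenvalue σ (it is nonzero whenever p ≠ 0 or σ ≠ 0). In particular this holds for σ with σ² = 2η ± 2w whenever w² = η² + p². -/
noncomputable section

/-- The asymptotic matrix `A∞(η,p)` of the compound (`Λ²`) system obtained from the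
linearization of the complex Ginzburg–Landau equation about the Hocking–Stewartson pulse. -/
def Ainf (η p : ℂ) : Matrix (Fin 6) (Fin 6) ℂ :=
  Matrix.of
    ![![0, 0, 1, -1, 0, 0],
      ![-p, 0, 0, 0, 0, 0],
      ![η, 0, 0, 0, 0, 1],
      ![-η, 0, 0, 0, 0, -1],
      ![-p, 0, 0, 0, 0, 0],
      ![0, -p, η, -η, -p, 0]]

/-- The candidate eigenvector `X(σ) = (2σ, −2p, σ², −σ², −2p, σ(σ² − 2η))`. -/
def Xvec (η p σ : ℂ) : Fin 6 → ℂ :=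
  ![2 * σ, -2 * p, σ ^ 2, -σ ^ 2, -2 * p, σ * (σ ^ 2 - 2 * η)]

end

lemma cons_val_five {α : Type*} (x : α) (u : Fin 5 → α) : Matrix.vecCons x u 5 = u 4 := rfl

lemma Ainf_mulVec_Xvec_aux (η p σ : ℂ) (h : (σ ^ 2 - 2 * η) ^ 2 = 4 * (η ^ 2 + p ^ 2)) :
    (Ainf η p).mulVec (Xvec η p σ) = σ • Xvec η p σ := by
  funext i
  fin_cases i <;>
    simp [Ainf, Xvec, Matrix.mulVec, dotProduct, Fin.sum_univ_six, Matrix.cons_val_zero, Matrix.cons_val_one, Matrix.head_cons,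
      Matrix.cons_val_two, Matrix.cons_val_three, Matrix.cons_val_four, cons_val_five,
      Matrix.vecHead, Matrix.vecTail] <;>
    (first | linear_combination h | linear_combination -h | linear_combination 2*h | linear_combination -2*h | ring)

/-- If `(σ² − 2η)² = 4(η² + p²)` then `X(σ)` is an eigenvector of `A∞(η,p)` with
eigenvalue `σ` (nonzero whenever `p ≠ 0` or `σ ≠ 0`); in particular this holds for any
`σ` with `σ² = 2η ± 2w` where `w² = η² + p²`. -/
theorem Ainf_mulVec_Xvec (η p σ : ℂ) (h : (σ ^ 2 - 2 * η) ^ 2 = 4 * (η ^ 2 + p ^ 2)) :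
    (Ainf η p).mulVec (Xvec η p σ) = σ • Xvec η p σ ∧
    ((p ≠ 0 ∨ σ ≠ 0) → Xvec η p σ ≠ 0) ∧
    (∀ w σ' : ℂ, w ^ 2 = η ^ 2 + p ^ 2 →
      (σ' ^ 2 = 2 * η + 2 * w ∨ σ' ^ 2 = 2 * η - 2 * w) →
      (Ainf η p).mulVec (Xvec η p σ') = σ' • Xvec η p σ') := by
  refine ⟨Ainf_mulVec_Xvec_aux η p σ h, ?_, ?_⟩
  · rintro (hp | hs) hx
    · have := congrFun hx 1
      simp [Xvec] at this
      exact hp this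
    · have := congrFun hx 0
      simp [Xvec] at this
      exact hs this
  · rintro w σ' hw (h' | h') <;>
      exact Ainf_mulVec_Xvec_aux η p σ' (by rw [h']; ring_nf; linear_combination 4*hw)
end

section
/- For all η, p ∈ ℂ, the characteristic polynomial of the 6×6 matrix A∞(η,p) equals X²·(X⁴ − 4η X² − 4p²) in ℂ[X]. In particular 0 is an eigenvalue of algebraic multiplicity at least 2, and the nonzero eigenvalues σ satisfy σ⁴ − 4η σ² − 4p² = 0, i.e. σ² = 2η ± 2w with w² = η² + p². -/
/-!
`A∞(η,p)` leaves invariant the subspace `W = {x₃ = -x₂, x₄ = x₁}` (coordinates numbered from `0`)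
and induces the zero map on `ℂ⁶ ⧸ W`, as the coordinates `x₂ + x₃` and `x₄ - x₁` of `A∞ x`
vanish. In a basis adapted to `W` the matrix is therefore block upper triangular with diagonal
blocks a `4 × 4` matrix, whose characteristic polynomial is `X⁴ - 4ηX² - 4p²`, and the `2 × 2`
zero matrix. The description of the nonzero eigenvalues follows by completing the square, with
`w = σ²/2 - η`.
-/

open Polynomial

namespace Matrix

variable {R : Type*} [CommRing R] {m n : Type*} [Fintype m] [Fintype n] [DecidableEq m]
  [DecidableEq n]

theorem charpoly_mul_mul_of_mul_eq_one {P : Matrix n m R} {Q : Matrix m n R} (hQP : Q * P = 1)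
    (hcard : Fintype.card m ≤ Fintype.card n) (B : Matrix m m R) :
    (P * B * Q).charpoly = X ^ (Fintype.card n - Fintype.card m) * B.charpoly := by
  rw [Matrix.mul_assoc, charpoly_mul_comm_of_le _ _ hcard, Matrix.mul_assoc, hQP, Matrix.mul_one]

end Matrix

theorem exists_sq_eq_of_biquadratic_eq_zero {K : Type*} [Field K] (h2 : (2 : K) ≠ 0)
    {η p σ : K} (h : σ ^ 4 - 4 * η * σ ^ 2 - 4 * p ^ 2 = 0) :
    ∃ w : K, w ^ 2 = η ^ 2 + p ^ 2 ∧ σ ^ 2 = 2 * η + 2 * w :=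
  ⟨(σ ^ 2 - 2 * η) / 2, by field_simp; linear_combination h, by field_simp; ring⟩

namespace Ainf

open Matrix

/-- The first four columns span the invariant subspace `W`. -/
def adaptedBasis : Matrix (Fin 6) (Fin 4 ⊕ Fin 2) ℂ :=
  fromCols
    !![1, 0, 0, 0; 0, 1, 0, 0; 0, 0, 1, 0; 0, 0, -1, 0; 0, 1, 0, 0; 0, 0, 0, 1]
    !![0, 0; 0, 0; 0, 0; 1, 0; 0, 1; 0, 0]

def adaptedCoords : Matrix (Fin 4 ⊕ Fin 2) (Fin 6) ℂ :=
  fromRows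
    !![1, 0, 0, 0, 0, 0; 0, 1, 0, 0, 0, 0; 0, 0, 1, 0, 0, 0; 0, 0, 0, 0, 0, 1]
    !![0, 0, 1, 1, 0, 0; 0, -1, 0, 0, 1, 0]

def invariantBlock (η p : ℂ) : Matrix (Fin 4) (Fin 4) ℂ :=
  !![0, 0, 2, 0; -p, 0, 0, 0; η, 0, 0, 1; 0, -2 * p, 2 * η, 0]

def couplingBlock (η p : ℂ) : Matrix (Fin 4) (Fin 2) ℂ :=
  !![-1, 0; 0, 0; 0, 0; -η, -p]

theorem adaptedCoords_mul_adaptedBasis : adaptedCoords * adaptedBasis = 1 := by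
  rw [adaptedCoords, adaptedBasis, fromRows_mul_fromCols, ← fromBlocks_one]
  congr 1 <;> ext i j <;> fin_cases i <;> fin_cases j <;> simp [mul_apply, Fin.sum_univ_succ]

theorem eq_adaptedBasis_mul_fromBlocks_mul (η p : ℂ) :
    Ainf η p = adaptedBasis *
      (fromBlocks (invariantBlock η p) (couplingBlock η p) 0 0 : Matrix (Fin 4 ⊕ Fin 2) _ ℂ) *
        adaptedCoords := by
  rw [adaptedBasis, adaptedCoords, fromCols_mul_fromBlocks, fromCols_mul_fromRows]
  ext i j
  fin_cases i <;> fin_cases j <;> simp [Ainf, invariantBlock, couplingBlock] <;> ring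

theorem charpoly_invariantBlock (η p : ℂ) :
    (invariantBlock η p).charpoly = X ^ 4 - C (4 * η) * X ^ 2 - C (4 * p ^ 2) := by
  rw [charpoly, det_succ_row_zero]
  simp +decide [Fin.sum_univ_succ, Fin.succAbove, invariantBlock, charmatrix_apply, det_fin_three,
    map_ofNat]
  ring

theorem charpoly_eq (η p : ℂ) :
    (Ainf η p).charpoly = X ^ 2 * (X ^ 4 - C (4 * η) * X ^ 2 - C (4 * p ^ 2)) := by
  rw [eq_adaptedBasis_mul_fromBlocks_mul,
    charpoly_mul_mul_of_mul_eq_one adaptedCoords_mul_adaptedBasis (by simp),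
    charpoly_fromBlocks_zero₂₁, charpoly_zero, charpoly_invariantBlock]
  simp only [Fintype.card_fin, Fintype.card_sum, Nat.sub_self, pow_zero, one_mul]
  ring

end Ainf

/-- The characteristic polynomial of `A∞(η,p)` is `X²(X⁴ − 4ηX² − 4p²)`.  In particular `0`
is an eigenvalue of algebraic multiplicity at least `2`, and every nonzero eigenvalue `σ`
satisfies `σ⁴ − 4ησ² − 4p² = 0`, i.e. `σ² = 2η ± 2w` with `w² = η² + p²`. -/
theorem Ainf_charpoly (η p : ℂ) :
    (Ainf η p).charpoly = X ^ 2 * (X ^ 4 - C (4 * η) * X ^ 2 - C (4 * p ^ 2)) ∧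
    2 ≤ (Ainf η p).charpoly.rootMultiplicity 0 ∧
    (∀ σ : ℂ, σ ≠ 0 → (Ainf η p).charpoly.IsRoot σ →
      σ ^ 4 - 4 * η * σ ^ 2 - 4 * p ^ 2 = 0 ∧
      ∃ w : ℂ, w ^ 2 = η ^ 2 + p ^ 2 ∧ (σ ^ 2 = 2 * η + 2 * w ∨ σ ^ 2 = 2 * η - 2 * w)) := by
  have hχ := Ainf.charpoly_eq η p
  refine ⟨hχ, ?_, fun σ hσ hroot => ?_⟩
  · rw [le_rootMultiplicity_iff (Matrix.charpoly_monic _).ne_zero, hχ]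
    simp only [map_zero, sub_zero]
    exact dvd_mul_right _ _
  · have hquartic : σ ^ 4 - 4 * η * σ ^ 2 - 4 * p ^ 2 = 0 := by
      simpa [hχ, hσ] using hroot
    obtain ⟨w, hw, hσw⟩ := exists_sq_eq_of_biquadratic_eq_zero two_ne_zero hquartic
    exact ⟨hquartic, w, hw, Or.inl hσw⟩
end

section
/- Fix ω = 3, ρ = 1/√5, ψ = arctan 2, and let λ ∈ ℂ with Re λ > 0. Set p = 2ω + λρ sin ψ and η = 1 − ω² + λρ cos ψ. Then every μ ∈ ℂ satisfying (μ² − η)² + p² = 0 (equivalently μ⁴ − 2η μ² + η² + p² = 0, the characteristic equation of the asymptotic linearized system on ℂ⁴) has Re μ ≠ 0. Consequently, since the roots of this quartic come in pairs ±μ, exactly two roots (counted with multiplicity) have positive real part and exactly two have negative real part; i.e., the system splits on {λ : Re λ > 0}. -/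
open Polynomial

/-!
Here `η = -8 + λ/5` and `p = 6 + 2λ/5`, and the quartic factors as
`(X² - (η - i p)) (X² - (η + i p))`. A purely imaginary root `μ` would make `μ² = η ± i p`
a nonpositive real; but for `λ = a + b i` the imaginary part of `η ± i p` vanishes only at
`b = ∓(30 + 2a)`, where its real part is `4 + a > 0`. So the four roots `±s₁, ±s₂` lie off
the imaginary axis, and the symmetry `μ ↦ -μ` splits them two and two.
-/

namespace Complex

lemma re_ne_zero_of_sq_eq {μ z : ℂ} (hμ : μ ^ 2 = z) (hz : z.im = 0 → 0 < z.re) :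
    μ.re ≠ 0 := by
  intro hre
  have hre_z : z.re = -μ.im ^ 2 := by simp [← hμ, sq, hre]
  have him_z : z.im = 0 := by simp [← hμ, sq, hre]
  nlinarith [hz him_z, sq_nonneg μ.im]

lemma sq_sub_add_sq_eq_zero_iff {μ η p : ℂ} :
    (μ ^ 2 - η) ^ 2 + p ^ 2 = 0 ↔ μ ^ 2 = η - I * p ∨ μ ^ 2 = η + I * p := by
  have hfac : (μ ^ 2 - η) ^ 2 + p ^ 2 =
      (μ ^ 2 - (η - I * p)) * (μ ^ 2 - (η + I * p)) := by
    linear_combination p ^ 2 * I_sq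
  rw [hfac, mul_eq_zero, sub_eq_zero, sub_eq_zero]

end Complex

namespace Multiset

lemma card_filter_re_pos_add_card_filter_re_neg {s : Multiset ℂ} (hs : ∀ z ∈ s, z.re ≠ 0) :
    card (s.filter (0 < ·.re)) + card (s.filter (·.re < 0)) = card s := by
  have hneg : s.filter (·.re < 0) = s.filter (fun z => ¬ 0 < z.re) :=
    filter_congr fun z hz => ⟨fun h => h.not_gt, fun h => (not_lt.1 h).lt_of_ne (hs z hz)⟩
  rw [hneg, ← card_add, filter_add_not]

lemma card_filter_re_pos_add_map_neg {s : Multiset ℂ} (hs : ∀ z ∈ s, z.re ≠ 0) :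
    card ((s + s.map Neg.neg).filter (0 < ·.re)) = card s := by
  rw [filter_add, filter_map, card_add, card_map, ← card_filter_re_pos_add_card_filter_re_neg hs]
  simp only [Function.comp_def, Complex.neg_re, neg_pos]

lemma card_filter_re_neg_add_map_neg {s : Multiset ℂ} (hs : ∀ z ∈ s, z.re ≠ 0) :
    card ((s + s.map Neg.neg).filter (·.re < 0)) = card s := by
  rw [filter_add, filter_map, card_add, card_map, ← card_filter_re_pos_add_card_filter_re_neg hs,
    add_comm]
  simp only [Function.comp_def, Complex.neg_re, neg_lt_zero]

end Multiset

namespace Polynomial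

lemma X_sq_sub_C_sq {R : Type*} [CommRing R] (s : R) :
    X ^ 2 - C (s ^ 2) = (X - C s) * (X - C (-s)) := by
  rw [map_neg, map_pow]; ring

lemma sq_X_sq_sub_C_add_C_sq {η p s₁ s₂ : ℂ} (hs₁ : s₁ ^ 2 = η - Complex.I * p)
    (hs₂ : s₂ ^ 2 = η + Complex.I * p) :
    (X ^ 2 - C η) ^ 2 + C (p ^ 2) = (X ^ 2 - C (s₁ ^ 2)) * (X ^ 2 - C (s₂ ^ 2)) := by
  rw [hs₁, hs₂]
  simp only [map_sub, map_add, map_mul, map_pow]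
  have hI : (C Complex.I) ^ 2 = -1 := by rw [← map_pow, Complex.I_sq, map_neg, map_one]
  linear_combination (C p) ^ 2 * hI

lemma roots_sq_X_sq_sub_C_add_C_sq {η p s₁ s₂ : ℂ} (hs₁ : s₁ ^ 2 = η - Complex.I * p)
    (hs₂ : s₂ ^ 2 = η + Complex.I * p) :
    ((X ^ 2 - C η) ^ 2 + C (p ^ 2)).roots =
      {s₁, s₂} + ({s₁, s₂} : Multiset ℂ).map Neg.neg := by
  rw [sq_X_sq_sub_C_add_C_sq hs₁ hs₂, X_sq_sub_C_sq, X_sq_sub_C_sq]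
  simp only [roots_mul, ne_eq, mul_eq_zero, X_sub_C_ne_zero, or_self, not_false_eq_true,
    roots_X_sub_C]
  simp only [Multiset.insert_eq_cons, Multiset.map_cons, Multiset.map_singleton]
  simp only [← Multiset.singleton_add]
  abel

end Polynomial

lemma one_div_sqrt_five_mul_sin_arctan_two :
    1 / Real.sqrt 5 * Real.sin (Real.arctan 2) = 2 / 5 := by
  rw [Real.sin_arctan, div_mul_div_comm]
  norm_num

lemma one_div_sqrt_five_mul_cos_arctan_two :
    1 / Real.sqrt 5 * Real.cos (Real.arctan 2) = 1 / 5 := by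
  rw [Real.cos_arctan, div_mul_div_comm]
  norm_num

lemma re_pos_of_im_eq_zero {lam z : ℂ} (hlam : 0 < lam.re)
    (hz : z = -8 + lam / 5 - Complex.I * (6 + 2 * lam / 5) ∨
      z = -8 + lam / 5 + Complex.I * (6 + 2 * lam / 5)) :
    z.im = 0 → 0 < z.re := by
  intro h
  rcases hz with rfl | rfl <;>
    simp only [Complex.add_re, Complex.sub_re, Complex.mul_re, Complex.neg_re,
      Complex.div_ofNat_re, Complex.add_im, Complex.sub_im, Complex.mul_im, Complex.neg_im,
      Complex.div_ofNat_im, Complex.I_re, Complex.I_im, Complex.re_ofNat,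
      Complex.im_ofNat] at h ⊢ <;>
    linarith

/-- For `ω = 3`, `ρ = 1/√5`, `ψ = arctan 2` and `Re λ > 0`, every spatial eigenvalue `μ` of
the asymptotic linearized system on `ℂ⁴`, i.e. every root of `(μ² − η)² + p² = 0` with
`p = 2ω + λρ sin ψ` and `η = 1 − ω² + λρ cos ψ`, has nonzero real part; consequently exactly
two roots (with multiplicity) have positive real part and exactly two have negative real
part, so the system splits on `{λ : Re λ > 0}`. -/
theorem splitting_on_right_half_plane (lam : ℂ) (hlam : 0 < lam.re)
    (ω ρ ψ : ℝ) (hω : ω = 3) (hρ : ρ = 1 / Real.sqrt 5) (hψ : ψ = Real.arctan 2)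
    (p η : ℂ) (hp : p = 2 * (ω : ℂ) + lam * (ρ : ℂ) * (Real.sin ψ : ℂ))
    (hη : η = 1 - (ω : ℂ) ^ 2 + lam * (ρ : ℂ) * (Real.cos ψ : ℂ)) :
    (∀ μ : ℂ, (μ ^ 2 - η) ^ 2 + p ^ 2 = 0 → μ.re ≠ 0) ∧
    Multiset.card
        (((( X ^ 2 - C η) ^ 2 + C (p ^ 2) : Polynomial ℂ).roots).filter
          (fun μ => 0 < μ.re)) = 2 ∧
    Multiset.card
        (((( X ^ 2 - C η) ^ 2 + C (p ^ 2) : Polynomial ℂ).roots).filter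
          (fun μ => μ.re < 0)) = 2 := by
  subst hω hρ hψ
  have hp' : p = 6 + 2 * lam / 5 := by
    rw [hp, mul_assoc, ← Complex.ofReal_mul, one_div_sqrt_five_mul_sin_arctan_two]
    push_cast; ring
  have hη' : η = -8 + lam / 5 := by
    rw [hη, mul_assoc, ← Complex.ofReal_mul, one_div_sqrt_five_mul_cos_arctan_two]
    push_cast; ring
  have hre : ∀ μ : ℂ, (μ ^ 2 - η) ^ 2 + p ^ 2 = 0 → μ.re ≠ 0 := fun μ hμ =>
    match Complex.sq_sub_add_sq_eq_zero_iff.1 hμ with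
    | .inl h => Complex.re_ne_zero_of_sq_eq h <|
        re_pos_of_im_eq_zero hlam (.inl (by rw [hη', hp']))
    | .inr h => Complex.re_ne_zero_of_sq_eq h <|
        re_pos_of_im_eq_zero hlam (.inr (by rw [hη', hp']))
  obtain ⟨s₁, hs₁⟩ := IsAlgClosed.exists_pow_nat_eq (η - Complex.I * p) two_pos
  obtain ⟨s₂, hs₂⟩ := IsAlgClosed.exists_pow_nat_eq (η + Complex.I * p) two_pos
  have hs : ∀ s ∈ ({s₁, s₂} : Multiset ℂ), s.re ≠ 0 := by
    simp only [Multiset.insert_eq_cons, Multiset.mem_cons, Multiset.mem_singleton,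
      forall_eq_or_imp, forall_eq]
    exact ⟨hre s₁ (Complex.sq_sub_add_sq_eq_zero_iff.2 (.inl hs₁)),
      hre s₂ (Complex.sq_sub_add_sq_eq_zero_iff.2 (.inr hs₂))⟩
  rw [roots_sq_X_sq_sub_C_add_C_sq hs₁ hs₂]
  exact ⟨hre, Multiset.card_filter_re_pos_add_map_neg hs,
    Multiset.card_filter_re_neg_add_map_neg hs⟩
end

section
/- Fix ω = 3, ρ = 1/√5, ψ = arctan 2, and let λ ∈ ℝ (regarded as a real point of ℂ) with λ ≠ −15. Set p = 2ω + λρ sin ψ and η = 1 − ω² + λρ cos ψ. Then every μ ∈ ℂ satisfying (μ² − η)² + p² = 0 has Re μ ≠ 0. In particular, the asymptotic system is hyperbolic at λ = −6.6357, so the splitting holds on a domain Ω containing both {Re λ > 0} and the eigenvalue near −6.6357. -/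
/-- For `ω = 3`, `ρ = 1/√5`, `ψ = arctan 2` and any real `λ ≠ −15` (the only real point of
the essential spectrum), every spatial eigenvalue `μ` of the asymptotic linearized system
on `ℂ⁴`, i.e. every root of `(μ² − η)² + p² = 0` with `p = 2ω + λρ sin ψ` and
`η = 1 − ω² + λρ cos ψ`, has nonzero real part.  In particular the asymptotic system is
hyperbolic at `λ = −6.6357`, so the splitting holds on a domain `Ω` containing both
`{Re λ > 0}` and the eigenvalue near `−6.6357`. -/
theorem hyperbolicity_on_real_axis (lam : ℝ) (hlam : lam ≠ -15)
    (ω ρ ψ : ℝ) (hω : ω = 3) (hρ : ρ = 1 / Real.sqrt 5) (hψ : ψ = Real.arctan 2)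
    (p η : ℂ) (hp : p = 2 * (ω : ℂ) + (lam : ℂ) * (ρ : ℂ) * (Real.sin ψ : ℂ))
    (hη : η = 1 - (ω : ℂ) ^ 2 + (lam : ℂ) * (ρ : ℂ) * (Real.cos ψ : ℂ)) :
    ∀ μ : ℂ, (μ ^ 2 - η) ^ 2 + p ^ 2 = 0 → μ.re ≠ 0 := by
  have h5' : Real.sqrt 5 * Real.sqrt 5 = 5 := Real.mul_self_sqrt (by norm_num)
  have h5 : Real.sqrt 5 ≠ 0 := by positivity
  have s5 : (Real.sqrt 5 : ℂ) ≠ 0 := by exact_mod_cast h5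
  have s5' : (Real.sqrt 5 : ℂ) * (Real.sqrt 5 : ℂ) = 5 := by exact_mod_cast h5'
  have hsin : Real.sin ψ = 2 / Real.sqrt 5 := by rw [hψ, Real.sin_arctan]; norm_num
  have hcos : Real.cos ψ = 1 / Real.sqrt 5 := by rw [hψ, Real.cos_arctan]; norm_num
  -- `p` and `η` are real
  have hpr : p = ((6 + 2 * lam / 5 : ℝ) : ℂ) := by
    rw [hp, hρ, hω, hsin]
    push_cast
    field_simp
    linear_combination (-2 * (lam : ℂ)) * s5'
  have hηr : η = ((-8 + lam / 5 : ℝ) : ℂ) := by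
    rw [hη, hρ, hω, hcos]
    push_cast
    field_simp
    linear_combination (-(lam : ℂ)) * s5'
  intro μ h hre
  -- since `Re μ = 0`, `μ = (Im μ) * I`
  have hmu : μ = (μ.im : ℂ) * Complex.I := by
    apply Complex.ext <;> simp [hre]
  rw [hmu, hpr, hηr] at h
  have hsq : ((μ.im : ℂ) * Complex.I) ^ 2 = -((μ.im ^ 2 : ℝ) : ℂ) := by
    rw [mul_pow, Complex.I_sq]; push_cast; ring
  rw [hsq] at h
  have h' : ((-(μ.im ^ 2) - (-8 + lam / 5)) ^ 2 + (6 + 2 * lam / 5) ^ 2 : ℝ) = 0 := by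
    exact_mod_cast h
  -- sum of two real squares is zero, so `p = 0`, i.e. `lam = -15`
  have hP : (6 + 2 * lam / 5 : ℝ) = 0 := by
    nlinarith [sq_nonneg (-(μ.im ^ 2) - (-8 + lam / 5)), sq_nonneg (6 + 2 * lam / 5)]
  exact hlam (by linarith)
end
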